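/- Let J = Z− and suppose the triangular system x(n+1) = (A11(n) A12(n); 0 A22(n)) x(n) admits an exponential dichotomy on Z−. Suppose further that: (1) the subspace U2 of X2 consisting of all v ∈ X2 for which there exists a bounded sequence (x2(n))_{n∈Z−} in X2 with x2(0) = v and x2(n) = A22(n−1)x2(n−1) for all n ≤ 0 is complemented in X2; and (2) the only bounded sequence (x2(n))_{n∈Z−} in X2 with x2(0) = 0 and x2(n) = A22(n−1)x2(n−1) for all n ≤ 0 is the zero sequence. Then the block system x2(n+1) = A22(n) x2(n) admits an exponential dichotomy on Z−. -/

import Mathlib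

open Real ContinuousLinearMap

noncomputable section

universe u

variable {X : Type u} [NormedAddCommGroup X] [NormedSpace ℝ X]

/-- The cocycle associated with the system `x(n+1) = A(n) x(n)`, as a function of the
number of steps: `cocycleAux A n k = A(n+k-1) ∘ ⋯ ∘ A(n)`. -/
def cocycleAux (A : ℤ → X →L[ℝ] X) (n : ℤ) : ℕ → (X →L[ℝ] X)
  | 0 => ContinuousLinearMap.id ℝ X
  | k + 1 => (A (n + k)).comp (cocycleAux A n k)

/-- The cocycle `Φ(m, n) = A(m-1) ⋯ A(n)` for `m > n`, and `Φ(n, n) = Id`. -/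
def Phi (A : ℤ → X →L[ℝ] X) (m n : ℤ) : X →L[ℝ] X :=
  cocycleAux A n (m - n).toNat

/-- The system `x(n+1) = A(n) x(n)`, `n ∈ J'`, admits an exponential dichotomy on `J`
with respect to the family of (bounded) projections `P(n)`, `n ∈ J`:
there are constants `K, α > 0` such that
(i) `P(n)` are projections, `A(n) P(n) = P(n+1) A(n)` for `n ∈ J'`, and `A(n)` maps
`ker P(n)` bijectively onto `ker P(n+1)` for `n ∈ J'`;
(ii) `‖Φ(m,n) P(n)‖ ≤ K e^{-α (m-n)}` for `m ≥ n` in `J`;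
(iii) `‖Φ(m,n) (Id - P(n))‖ ≤ K e^{-α (n-m)}` for `m ≤ n` in `J`, where
`Φ(m,n) : ker P(n) → ker P(m)` denotes the inverse of `Φ(n,m)` restricted to `ker P(m)`;
the latter is phrased as: whenever `x ∈ ker P(m)` and `Φ(n,m) x = (Id - P(n)) y`,
then `‖x‖ ≤ K e^{-α (n-m)} ‖y‖`. -/
def IsExpDichotomy (J J' : Set ℤ) (A P : ℤ → X →L[ℝ] X) : Prop :=
  ∃ K α : ℝ, 0 < K ∧ 0 < α ∧
    (∀ n ∈ J, (P n).comp (P n) = P n) ∧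
    (∀ n ∈ J', (A n).comp (P n) = (P (n + 1)).comp (A n)) ∧
    (∀ n ∈ J', Set.BijOn (A n) {x : X | P n x = 0} {x : X | P (n + 1) x = 0}) ∧
    (∀ m n : ℤ, m ∈ J → n ∈ J → n ≤ m →
      ‖(Phi A m n).comp (P n)‖ ≤ K * Real.exp (-α * ((m : ℝ) - (n : ℝ)))) ∧
    (∀ m n : ℤ, m ∈ J → n ∈ J → m ≤ n → ∀ x y : X,
      P m x = 0 → Phi A n m x = y - P n y →
      ‖x‖ ≤ K * Real.exp (-α * ((n : ℝ) - (m : ℝ))) * ‖y‖)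

/-- The system `x(n+1) = A(n) x(n)`, `n ∈ J'`, admits an exponential dichotomy on `J`. -/
def ExpDichotomy (J J' : Set ℤ) (A : ℤ → X →L[ℝ] X) : Prop :=
  ∃ P : ℤ → X →L[ℝ] X, IsExpDichotomy J J' A P

/-- A subspace (given as a set) `S` of `X` is complemented: there is a closed subspace `Z`
of `X` with `X = S ⊕ Z`. -/
def IsComplementedSubspace (S : Set X) : Prop :=
  ∃ Z : Submodule ℝ X, IsClosed (Z : Set X) ∧
    (∀ v ∈ S, v ∈ Z → v = (0 : X)) ∧ ∀ v : X, ∃ s ∈ S, ∃ z ∈ Z, v = s + z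

/-- The subspace `S = {v : sup_{n ∈ ℤ⁺} ‖Φ(n,0) v‖ < ∞}` of initial conditions of bounded
forward solutions. -/
def Sset (A : ℤ → X →L[ℝ] X) : Set X :=
  {v : X | ∃ C : ℝ, ∀ n : ℤ, 0 ≤ n → ‖Phi A n 0 v‖ ≤ C}

/-- The subspace `U(m)` of all `v` for which there is a bounded sequence `(x(n))_{n ≤ m}`
with `x(m) = v` and `x(n) = A(n-1) x(n-1)` for `n ≤ m`. -/
def Uset (A : ℤ → X →L[ℝ] X) (m : ℤ) : Set X :=
  {v : X | ∃ x : ℤ → X, x m = v ∧ (∃ C : ℝ, ∀ n : ℤ, n ≤ m → ‖x n‖ ≤ C) ∧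
    ∀ n : ℤ, n ≤ m → x n = A (n - 1) (x (n - 1))}

variable {X1 : Type u} {X2 : Type u} [NormedAddCommGroup X1] [NormedSpace ℝ X1]
  [NormedAddCommGroup X2] [NormedSpace ℝ X2]

/-- The triangular system operator `(x1, x2) ↦ (A11(n) x1 + A12(n) x2, A22(n) x2)`. -/
def triangular (A11 : ℤ → X1 →L[ℝ] X1) (A12 : ℤ → X2 →L[ℝ] X1)
    (A22 : ℤ → X2 →L[ℝ] X2) (n : ℤ) : (X1 × X2) →L[ℝ] X1 × X2 :=
  (((A11 n).comp (fst ℝ X1 X2)) + ((A12 n).comp (snd ℝ X1 X2))).prod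
    ((A22 n).comp (snd ℝ X1 X2))

/-- The diagonal system operator `(x1, x2) ↦ (A11(n) x1, A22(n) x2)`. -/
def diagonal (A11 : ℤ → X1 →L[ℝ] X1) (A22 : ℤ → X2 →L[ℝ] X2) (n : ℤ) :
    (X1 × X2) →L[ℝ] X1 × X2 :=
  (A11 n).prodMap (A22 n)


/-!
Through its Green function, the dichotomy of the triangular system `T` gives for every bounded
`f` a bounded solution on `ℤ⁻` of `y(n) = T(n-1) y(n-1) + (0, f(n))`, whose second component solves
the `A22`-equation. Correcting it by a bounded orbit through the `U(0)`-component of `y(0)` along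
the closed complement `Z` (open mapping theorem) and using uniqueness, the solution `w` with
`w(0) ∈ Z` satisfies `‖w‖ ≤ L ‖f‖`. With `f = δₙ v` this bounds the projections onto
`{v | Φ(0,n) v ∈ Z}` along `U(n)`, and the Massera–Schäffer test functions `f = x / ‖x‖` on a
window give `(∑ᵢ 1/‖x(i)‖) ‖x(j)‖ ≤ L`, which forces exponential decay of forward orbits in the
stable spaces and of bounded backward orbits.
-/

open scoped BoundedContinuousFunction

-- With these, `Uset A m` unfolds to `{v | ∃ x, x m = v ∧ BddUpTo x m ∧ IsOrbitUpTo A x m}`.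

def IsOrbitUpTo (A : ℤ → X →L[ℝ] X) (x : ℤ → X) (n : ℤ) : Prop :=
  ∀ j ≤ n, x j = A (j - 1) (x (j - 1))

def SolvesUpTo (A : ℤ → X →L[ℝ] X) (f x : ℤ → X) (n : ℤ) : Prop :=
  ∀ j ≤ n, x j = A (j - 1) (x (j - 1)) + f j

def BddUpTo {E : Type*} [Norm E] (x : ℤ → E) (n : ℤ) : Prop :=
  ∃ C : ℝ, ∀ j ≤ n, ‖x j‖ ≤ C

section Bdd

variable {E : Type*} [SeminormedAddCommGroup E]

theorem BddUpTo.extend {x : ℤ → E} {m : ℤ} (h : BddUpTo x m) (n : ℤ) : BddUpTo x n := by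
  obtain ⟨C, hC⟩ := h
  have hC0 : 0 ≤ C := (norm_nonneg _).trans (hC m le_rfl)
  have hsum : 0 ≤ ∑ i ∈ Finset.Icc (m + 1) n, ‖x i‖ := by positivity
  refine ⟨C + ∑ i ∈ Finset.Icc (m + 1) n, ‖x i‖, fun j hj => ?_⟩
  rcases le_or_gt j m with hjm | hjm
  · linarith [hC j hjm]
  · have := Finset.single_le_sum (f := fun i => ‖x i‖) (fun i _ => norm_nonneg _)
      (Finset.mem_Icc.2 ⟨hjm, hj⟩)
    linarith

theorem BddUpTo.add {x y : ℤ → E} {n : ℤ} (hx : BddUpTo x n) (hy : BddUpTo y n) :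
    BddUpTo (x + y) n := by
  obtain ⟨C, hC⟩ := hx
  obtain ⟨D, hD⟩ := hy
  exact ⟨C + D, fun j hj => (norm_add_le _ _).trans (add_le_add (hC j hj) (hD j hj))⟩

end Bdd

theorem SolvesUpTo.add {A : ℤ → X →L[ℝ] X} {f g x y : ℤ → X} {n : ℤ}
    (hx : SolvesUpTo A f x n) (hy : SolvesUpTo A g y n) : SolvesUpTo A (f + g) (x + y) n := by
  intro j hj
  simp only [Pi.add_apply, hx j hj, hy j hj, map_add]
  abel

section Cocycle

variable (A : ℤ → X →L[ℝ] X)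

theorem Phi_self (n : ℤ) : Phi A n n = ContinuousLinearMap.id ℝ X := by
  simp [Phi, cocycleAux]

theorem Phi_succ_apply {m n : ℤ} (h : n ≤ m) (v : X) :
    Phi A (m + 1) n v = A m (Phi A m n v) := by
  have h1 : (m + 1 - n).toNat = (m - n).toNat + 1 := by omega
  have h2 : n + ((m - n).toNat : ℤ) = m := by omega
  simp only [Phi, h1, cocycleAux, h2, ContinuousLinearMap.comp_apply]

theorem Phi_succ_self_apply (n : ℤ) (v : X) : Phi A (n + 1) n v = A n v := by
  rw [Phi_succ_apply A le_rfl, Phi_self, ContinuousLinearMap.id_apply]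

theorem Phi_apply_eq_of_forall_step {x : ℤ → X} {n m : ℤ} (hnm : n ≤ m)
    (hx : ∀ j, n < j → j ≤ m → x j = A (j - 1) (x (j - 1))) : Phi A m n (x n) = x m := by
  induction m, hnm using Int.leInduction with
  | base => simp [Phi_self]
  | succ m hnm ih =>
    rw [Phi_succ_apply A hnm, ih fun j h1 h2 => hx j h1 (by omega), hx (m + 1) (by omega) le_rfl,
      add_sub_cancel_right]

theorem Phi_apply_Phi {m k n : ℤ} (hmk : m ≤ k) (hkn : k ≤ n) (v : X) :
    Phi A n k (Phi A k m v) = Phi A n m v :=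
  Phi_apply_eq_of_forall_step (x := fun j => Phi A j m v) A hkn fun j h _ => by
    rw [← Phi_succ_apply A (by omega), sub_add_cancel]

theorem IsOrbitUpTo.Phi_apply {x : ℤ → X} {n m k : ℤ} (hx : IsOrbitUpTo A x k) (hnm : n ≤ m)
    (hmk : m ≤ k) : Phi A m n (x n) = x m :=
  Phi_apply_eq_of_forall_step A hnm fun j _ hj => hx j (hj.trans hmk)

def forwardExtend (x : ℤ → X) (m : ℤ) : ℤ → X :=
  fun j => if j ≤ m then x j else Phi A j m (x m)

variable {A}

theorem forwardExtend_of_le {x : ℤ → X} {m j : ℤ} (h : j ≤ m) : forwardExtend A x m j = x j :=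
  if_pos h

theorem forwardExtend_of_ge {x : ℤ → X} {m j : ℤ} (h : m ≤ j) :
    forwardExtend A x m j = Phi A j m (x m) := by
  rcases h.lt_or_eq with h | rfl
  · exact if_neg (by omega)
  · simp [forwardExtend, Phi_self]

theorem IsOrbitUpTo.forwardExtend {x : ℤ → X} {m : ℤ} (hx : IsOrbitUpTo A x m) (n : ℤ) :
    IsOrbitUpTo A (forwardExtend A x m) n := by
  intro j _
  rcases le_or_gt j m with h | h
  · rw [forwardExtend_of_le h, forwardExtend_of_le (by omega), hx j h]
  · rw [forwardExtend_of_ge h.le, forwardExtend_of_ge (by omega), ← Phi_succ_apply A (by omega),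
      sub_add_cancel]

theorem BddUpTo.forwardExtend {x : ℤ → X} {m : ℤ} (hx : BddUpTo x m) (n : ℤ) :
    BddUpTo (forwardExtend A x m) n := by
  obtain ⟨C, hC⟩ := hx
  exact BddUpTo.extend ⟨C, fun j hj => by rw [forwardExtend_of_le hj]; exact hC j hj⟩ n

theorem mem_Uset_of_isOrbitUpTo {x : ℤ → X} {m n : ℤ}
    (hx : IsOrbitUpTo A x n) (hb : BddUpTo x n) (hmn : m ≤ n) : x m ∈ Uset A m := by
  obtain ⟨C, hC⟩ := hb
  exact ⟨x, rfl, ⟨C, fun j hj => hC j (hj.trans hmn)⟩, fun j hj => hx j (hj.trans hmn)⟩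

theorem exists_orbit_of_mem_Uset {u : X} {m : ℤ} (hu : u ∈ Uset A m) :
    ∃ x, x m = u ∧ IsOrbitUpTo A x 0 ∧ BddUpTo x 0 ∧ ∀ j, m ≤ j → x j = Phi A j m u := by
  obtain ⟨x, rfl, hb, hx⟩ := hu
  exact ⟨forwardExtend A x m, forwardExtend_of_le le_rfl, IsOrbitUpTo.forwardExtend hx 0,
    BddUpTo.forwardExtend hb 0, fun j hj => forwardExtend_of_ge hj⟩

theorem Phi_mem_Uset {u : X} {m n : ℤ} (hu : u ∈ Uset A m) (hmn : m ≤ n) :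
    Phi A n m u ∈ Uset A n := by
  obtain ⟨x, rfl, hb, hx⟩ := hu
  exact ⟨forwardExtend A x m, forwardExtend_of_ge hmn, BddUpTo.forwardExtend hb n,
    IsOrbitUpTo.forwardExtend hx n⟩

end Cocycle

def unstableSubspace (A : ℤ → X →L[ℝ] X) (n : ℤ) : Submodule ℝ X where
  carrier := Uset A n
  add_mem' := by
    rintro _ _ ⟨x, rfl, hxb, hx⟩ ⟨y, rfl, hyb, hy⟩
    exact ⟨x + y, rfl, BddUpTo.add hxb hyb, fun j hj => by simp [hx j hj, hy j hj]⟩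
  zero_mem' := ⟨0, rfl, ⟨0, fun _ _ => by simp⟩, fun _ _ => by simp⟩
  smul_mem' := by
    rintro c _ ⟨x, rfl, ⟨C, hC⟩, hx⟩
    refine ⟨c • x, rfl, ⟨‖c‖ * C, fun j hj => ?_⟩, fun j hj => by simp [hx j hj]⟩
    rw [Pi.smul_apply, norm_smul]
    exact mul_le_mul_of_nonneg_left (hC j hj) (norm_nonneg c)

/-! ### Green function of a dichotomy -/

theorem exp_neg_mul_sub_eq_pow (α : ℝ) {m n : ℤ} (h : n ≤ m) :
    Real.exp (-α * ((m : ℝ) - n)) = Real.exp (-α) ^ (m - n).toNat := by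
  rw [← Real.exp_nat_mul]
  congr 1
  have : (((m - n).toNat : ℕ) : ℝ) = (m : ℝ) - n := by exact_mod_cast Int.toNat_of_nonneg (by omega)
  rw [this]
  ring

theorem sum_Icc_pow_toNat_le {r : ℝ} (hr0 : 0 ≤ r) (hr1 : r < 1) (n b : ℤ) :
    ∑ m ∈ Finset.Icc (n + 1) b, r ^ (m - n).toNat ≤ (1 - r)⁻¹ := by
  rw [← Finset.sum_image (g := fun m : ℤ => (m - n).toNat) fun x hx y hy hxy => by
    simp only [Finset.coe_Icc, Set.mem_Icc] at hx hy hxy; omega]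
  rw [← tsum_geometric_of_lt_one hr0 hr1]
  exact (summable_geometric_of_lt_one hr0 hr1).sum_le_tsum _ fun i _ => pow_nonneg hr0 i

theorem exists_backward_orbit {α : Type*} {f : ℤ → α → α} {s : ℤ → Set α} {m : ℤ}
    (hf : ∀ k < m, Set.SurjOn (f k) (s k) (s (k + 1))) {z : α} (hz : z ∈ s m) :
    ∃ ζ : ℤ → α, ζ m = z ∧ (∀ k ≤ m, ζ k ∈ s k) ∧ ∀ k < m, f k (ζ k) = ζ (k + 1) := by
  have : Nonempty α := ⟨z⟩
  let b : ℕ → α := fun i =>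
    Nat.rec z (fun i y => Function.invFunOn (f (m - i - 1)) (s (m - i - 1)) y) i
  have hcast (i : ℕ) : m - ((i + 1 : ℕ) : ℤ) = m - i - 1 := by push_cast; ring
  have hpre : ∀ i : ℕ, b i ∈ s (m - i) → ∃ a ∈ s (m - i - 1), f (m - i - 1) a = b i :=
    fun i hi => hf (m - i - 1) (by omega) (by rwa [sub_add_cancel])
  have hmem : ∀ i : ℕ, b i ∈ s (m - i) := by
    intro i
    induction i with
    | zero => simpa [b] using hz
    | succ i ih =>
      rw [hcast]
      exact Function.invFunOn_mem (hpre i ih)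
  have hstep (i : ℕ) : f (m - i - 1) (b (i + 1)) = b i :=
    Function.invFunOn_eq (hpre i (hmem i))
  refine ⟨fun k => b (m - k).toNat, by simp [b], fun k hk => ?_, fun k hk => ?_⟩
  · simpa [show ((m - k).toNat : ℤ) = m - k by omega] using hmem (m - k).toNat
  · have := hstep (m - (k + 1)).toNat
    rwa [show m - ((m - (k + 1)).toNat : ℤ) - 1 = k by omega,
      show (m - (k + 1)).toNat + 1 = (m - k).toNat by omega] at this

def IsAdmissible (A : ℤ → X →L[ℝ] X) (L : ℝ) : Prop :=
  ∀ (f : ℤ → X) (F : ℝ), (∀ j ≤ 0, ‖f j‖ ≤ F) →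
    ∃ y, SolvesUpTo A f y 0 ∧ ∀ j ≤ 0, ‖y j‖ ≤ L * F

section GreenFunction

variable {A P : ℤ → X →L[ℝ] X} {K r : ℝ} {g : ℤ → X} {G : ℝ}

/-- The stable half of the Green function: `y(n) = ∑ᵢ Φ(n, n-i) P(n-i) g(n-i)`. -/
theorem exists_solvesUpTo_proj [CompleteSpace X] (hr0 : 0 ≤ r) (hr1 : r < 1) (hK : 0 ≤ K)
    (hfwd : ∀ m n : ℤ, m ≤ 0 → n ≤ m → ∀ v, ‖Phi A m n (P n v)‖ ≤ K * r ^ (m - n).toNat * ‖v‖)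
    (hg : ∀ j ≤ 0, ‖g j‖ ≤ G) :
    ∃ y, SolvesUpTo A (fun j => P j (g j)) y 0 ∧ ∀ j ≤ 0, ‖y j‖ ≤ K * (1 - r)⁻¹ * G := by
  set term : ℤ → ℕ → X := fun n i => Phi A n (n - i) (P (n - i) (g (n - i)))
  have hterm : ∀ n ≤ 0, ∀ i : ℕ, ‖term n i‖ ≤ K * G * r ^ i := fun n hn i => by
    have := hfwd n (n - i) hn (by omega) (g (n - i))
    rw [show (n - (n - i)).toNat = i by omega] at this
    calc ‖term n i‖ ≤ K * r ^ i * ‖g (n - i)‖ := this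
      _ ≤ K * r ^ i * G := by gcongr; exact hg _ (by omega)
      _ = K * G * r ^ i := by ring
  have hgeom : HasSum (fun i : ℕ => K * G * r ^ i) (K * G * (1 - r)⁻¹) :=
    (hasSum_geometric_of_lt_one hr0 hr1).mul_left _
  have hsum : ∀ n ≤ 0, Summable (term n) := fun n hn =>
    Summable.of_norm_bounded hgeom.summable (hterm n hn)
  refine ⟨fun n => ∑' i, term n i, fun j hj => ?_, fun j hj => ?_⟩
  · have hshift (i : ℕ) : term j (i + 1) = A (j - 1) (term (j - 1) i) := by
      simp only [term]
      rw [show j - ((i + 1 : ℕ) : ℤ) = j - 1 - i by push_cast; ring,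
        ← Phi_succ_apply A (by omega), sub_add_cancel]
    show ∑' i, term j i = A (j - 1) (∑' i, term (j - 1) i) + P j (g j)
    rw [(hsum j hj).tsum_eq_zero_add, ContinuousLinearMap.map_tsum _ (hsum (j - 1) (by omega)),
      add_comm]
    simp [term, hshift, Phi_self]
  · calc ‖∑' i, term j i‖ ≤ K * G * (1 - r)⁻¹ := tsum_of_norm_bounded hgeom (hterm j hj)
      _ = K * (1 - r)⁻¹ * G := by ring

/-- The unstable half of the Green function: `y(n) = -∑_{m=n+1}^{0} Φ(n, m)(I - P(m)) g(m)`, where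
`Φ(n, m)` inverts the cocycle on `ker P`. -/
theorem exists_solvesUpTo_id_sub_proj (hr0 : 0 ≤ r) (hr1 : r < 1) (hK : 0 ≤ K)
    (hproj : ∀ n ≤ 0, (P n).comp (P n) = P n)
    (hsurj : ∀ n ≤ -1, Set.SurjOn (A n) {x | P n x = 0} {x | P (n + 1) x = 0})
    (hbwd : ∀ m n : ℤ, n ≤ 0 → m ≤ n → ∀ x y : X, P m x = 0 → Phi A n m x = y - P n y →
      ‖x‖ ≤ K * r ^ (n - m).toNat * ‖y‖)
    (hg : ∀ j ≤ 0, ‖g j‖ ≤ G) :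
    ∃ y, SolvesUpTo A (fun j => g j - P j (g j)) y 0 ∧ ∀ j ≤ 0, ‖y j‖ ≤ K * (1 - r)⁻¹ * G := by
  have horbit (m : ℤ) : ∃ ζ : ℤ → X, m ≤ 0 → ζ m = g m - P m (g m) ∧
      (∀ k ≤ m, P k (ζ k) = 0) ∧ ∀ k < m, A k (ζ k) = ζ (k + 1) := by
    by_cases hm : m ≤ 0
    · have hz : P m (g m - P m (g m)) = 0 := by
        rw [map_sub, ← ContinuousLinearMap.comp_apply, hproj m hm, sub_self]
      obtain ⟨ζ, h⟩ := exists_backward_orbit (f := fun k => A k) (s := fun k => {x | P k x = 0})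
        (fun k hk => hsurj k (by omega)) hz
      exact ⟨ζ, fun _ => h⟩
    · exact ⟨0, fun h => absurd h hm⟩
  choose ζ hζ using horbit
  have hζ_le : ∀ m ≤ 0, ∀ k ≤ m, ‖ζ m k‖ ≤ K * G * r ^ (m - k).toNat := by
    intro m hm k hk
    obtain ⟨h0, hker, hstep⟩ := hζ m hm
    have hPhi : Phi A m k (ζ m k) = g m - P m (g m) := by
      rw [← h0]
      exact Phi_apply_eq_of_forall_step A hk fun j _ _ => by
        rw [hstep (j - 1) (by omega), sub_add_cancel]
    calc ‖ζ m k‖ ≤ K * r ^ (m - k).toNat * ‖g m‖ := hbwd k m hm hk _ _ (hker k hk) hPhi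
      _ ≤ K * r ^ (m - k).toNat * G := by gcongr; exact hg m hm
      _ = K * G * r ^ (m - k).toNat := by ring
  refine ⟨fun n => -∑ m ∈ Finset.Icc (n + 1) 0, ζ m n, fun j hj => ?_, fun j hj => ?_⟩
  · have hA : A (j - 1) (∑ m ∈ Finset.Icc j 0, ζ m (j - 1)) = ∑ m ∈ Finset.Icc j 0, ζ m j := by
      rw [map_sum]
      refine Finset.sum_congr rfl fun m hm => ?_
      rw [Finset.mem_Icc] at hm
      rw [(hζ m hm.2).2.2 (j - 1) (by omega), sub_add_cancel]
    simp only [sub_add_cancel, map_neg, hA]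
    rw [← Finset.insert_Icc_add_one_left_eq_Icc hj, Finset.sum_insert (by simp), (hζ j hj).1]
    abel
  · calc ‖-∑ m ∈ Finset.Icc (j + 1) 0, ζ m j‖
        ≤ ∑ m ∈ Finset.Icc (j + 1) 0, K * G * r ^ (m - j).toNat := by
          rw [norm_neg]
          refine (norm_sum_le _ _).trans (Finset.sum_le_sum fun m hm => ?_)
          rw [Finset.mem_Icc] at hm
          exact hζ_le m hm.2 j (by omega)
      _ ≤ K * G * (1 - r)⁻¹ := by
          rw [← Finset.mul_sum]
          have hG : 0 ≤ G := (norm_nonneg _).trans (hg 0 le_rfl)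
          gcongr
          exact sum_Icc_pow_toNat_le hr0 hr1 j 0
      _ = K * (1 - r)⁻¹ * G := by ring

end GreenFunction

theorem IsExpDichotomy.isAdmissible [CompleteSpace X] {A P : ℤ → X →L[ℝ] X}
    (h : IsExpDichotomy {n : ℤ | n ≤ 0} {n : ℤ | n ≤ -1} A P) : ∃ L, IsAdmissible A L := by
  obtain ⟨K, α, hK, hα, hproj, -, hbij, hfwd, hbwd⟩ := h
  set r := Real.exp (-α)
  have hr0 : 0 ≤ r := (Real.exp_pos _).le
  have hr1 : r < 1 := Real.exp_lt_one_iff.2 (by linarith)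
  refine ⟨2 * K * (1 - r)⁻¹, fun g G hg => ?_⟩
  obtain ⟨ys, hys, hysb⟩ := exists_solvesUpTo_proj hr0 hr1 hK.le (fun m n hm hnm v =>
    calc ‖Phi A m n (P n v)‖ ≤ ‖(Phi A m n).comp (P n)‖ * ‖v‖ :=
          ((Phi A m n).comp (P n)).le_opNorm v
      _ ≤ K * r ^ (m - n).toNat * ‖v‖ := by
          rw [← exp_neg_mul_sub_eq_pow α hnm]
          gcongr
          exact hfwd m n hm (hnm.trans hm) hnm) hg
  obtain ⟨yu, hyu, hyub⟩ := exists_solvesUpTo_id_sub_proj hr0 hr1 hK.le hproj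
    (fun n hn => (hbij n hn).surjOn) (fun m n hn hmn x y hx hxy => by
      simpa only [exp_neg_mul_sub_eq_pow α hmn] using
        hbwd m n (hmn.trans hn) hn hmn x y hx hxy) hg
  refine ⟨ys + yu, fun j hj => by simpa using (hys.add hyu) j hj, fun j hj => ?_⟩
  calc ‖ys j + yu j‖ ≤ K * (1 - r)⁻¹ * G + K * (1 - r)⁻¹ * G :=
        (norm_add_le _ _).trans (add_le_add (hysb j hj) (hyub j hj))
    _ = 2 * K * (1 - r)⁻¹ * G := by ring

theorem IsAdmissible.triangular_snd {A11 : ℤ → X1 →L[ℝ] X1} {A12 : ℤ → X2 →L[ℝ] X1}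
    {A22 : ℤ → X2 →L[ℝ] X2} {L : ℝ} (h : IsAdmissible (triangular A11 A12 A22) L) :
    IsAdmissible A22 L := by
  intro f F hf
  obtain ⟨y, hy, hyb⟩ := h (fun j => (0, f j)) F fun j hj =>
    norm_prod_le_iff.2 ⟨by simpa using (norm_nonneg _).trans (hf j hj), hf j hj⟩
  exact ⟨fun j => (y j).2, fun j hj => congrArg Prod.snd (hy j hj),
    fun j hj => (_root_.norm_snd_le _).trans (hyb j hj)⟩

/-! ### Normalised solutions and the open mapping theorem -/

def SolutionsBoundedBy (A : ℤ → X →L[ℝ] X) (Z : Submodule ℝ X) (L : ℝ) : Prop :=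
  ∀ (f w : ℤ → X) (F : ℝ), (∀ j ≤ 0, ‖f j‖ ≤ F) → SolvesUpTo A f w 0 → BddUpTo w 0 →
    w 0 ∈ Z → ∀ j ≤ 0, ‖w j‖ ≤ L * F

def boundedOrbits (A : ℤ → X →L[ℝ] X) : Submodule ℝ (ℤ →ᵇ X) where
  carrier := {x | IsOrbitUpTo A x 0 ∧ ∀ j, 0 < j → x j = 0}
  add_mem' := fun hx hy =>
    ⟨fun j hj => by simp [hx.1 j hj, hy.1 j hj], fun j hj => by simp [hx.2 j hj, hy.2 j hj]⟩
  zero_mem' := ⟨fun j _ => by simp, fun j _ => rfl⟩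
  smul_mem' := fun c x hx => ⟨fun j hj => by simp [hx.1 j hj], fun j hj => by simp [hx.2 j hj]⟩

theorem isClosed_boundedOrbits (A : ℤ → X →L[ℝ] X) :
    IsClosed (boundedOrbits A : Set (ℤ →ᵇ X)) := by
  have hev (j : ℤ) : Continuous fun x : ℤ →ᵇ X => x j :=
    (BoundedContinuousFunction.lipschitz_eval_const j).continuous
  have : (boundedOrbits A : Set (ℤ →ᵇ X)) =
      (⋂ j ∈ Set.Iic (0 : ℤ), {x | x j = A (j - 1) (x (j - 1))}) ∩
        ⋂ j ∈ Set.Ioi (0 : ℤ), {x | x j = 0} := by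
    ext x
    simp [boundedOrbits, IsOrbitUpTo]
  rw [this]
  exact (isClosed_biInter fun j _ =>
      isClosed_eq (hev j) ((A (j - 1)).continuous.comp (hev _))).inter
    (isClosed_biInter fun j _ => isClosed_eq (hev j) continuous_const)

def orbitAddMap (A : ℤ → X →L[ℝ] X) (Z : Submodule ℝ X) : boundedOrbits A × Z →L[ℝ] X :=
  BoundedContinuousFunction.evalCLM ℝ 0 ∘L (boundedOrbits A).subtypeL ∘L
    ContinuousLinearMap.fst ℝ _ _ + Z.subtypeL ∘L ContinuousLinearMap.snd ℝ _ _

section OrbitAddMap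

variable {A : ℤ → X →L[ℝ] X} {Z : Submodule ℝ X}

theorem orbitAddMap_apply (p : boundedOrbits A × Z) :
    orbitAddMap A Z p = (p.1 : ℤ →ᵇ X) 0 + p.2 := rfl

theorem orbitAddMap_bijective (hspan : ∀ v : X, ∃ s ∈ Uset A 0, ∃ z ∈ Z, v = s + z)
    (huniq : ∀ x : ℤ → X, IsOrbitUpTo A x 0 → BddUpTo x 0 → x 0 ∈ Z → ∀ j ≤ 0, x j = 0) :
    Function.Bijective (orbitAddMap A Z) := by
  refine ⟨(injective_iff_map_eq_zero _).2 fun ⟨x, z⟩ h => ?_, fun v => ?_⟩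
  · rw [orbitAddMap_apply] at h
    have hx0 : (x : ℤ →ᵇ X) 0 ∈ Z := by
      rw [eq_neg_of_add_eq_zero_left h]
      exact Z.neg_mem z.2
    have hx := huniq _ x.2.1 ⟨‖(x : ℤ →ᵇ X)‖, fun j _ => (x : ℤ →ᵇ X).norm_coe_le_norm j⟩ hx0
    have hx' : x = 0 := Subtype.ext <| BoundedContinuousFunction.ext fun j => by
      rcases le_or_gt j 0 with hj | hj
      · exact hx j hj
      · exact x.2.2 j hj
    subst hx'
    have hz : z = 0 := Subtype.ext (by simpa using h)
    rw [hz]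
    rfl
  · obtain ⟨s, ⟨x, rfl, ⟨C, hC⟩, hx⟩, z, hz, rfl⟩ := hspan v
    let x' : ℤ →ᵇ X := BoundedContinuousFunction.ofNormedAddCommGroup
      (fun j => if j ≤ 0 then x j else 0) continuous_of_discreteTopology (max C 0) fun j => by
        split_ifs with hj
        · exact (hC j hj).trans (le_max_left _ _)
        · simp
    have hx' : ∀ j, x' j = if j ≤ 0 then x j else 0 := fun j => rfl
    refine ⟨(⟨x', fun j hj => ?_, fun j hj => ?_⟩, ⟨z, hz⟩), ?_⟩
    · rw [hx', hx', if_pos hj, if_pos (by omega), hx j hj]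
    · rw [hx', if_neg (by omega)]
    · rw [orbitAddMap_apply]
      simp [hx']

theorem exists_orbit_sub_mem [CompleteSpace X] (hZ : IsClosed (Z : Set X))
    (hspan : ∀ v : X, ∃ s ∈ Uset A 0, ∃ z ∈ Z, v = s + z)
    (huniq : ∀ x : ℤ → X, IsOrbitUpTo A x 0 → BddUpTo x 0 → x 0 ∈ Z → ∀ j ≤ 0, x j = 0) :
    ∃ C, 0 ≤ C ∧ ∀ v : X, ∃ x, IsOrbitUpTo A x 0 ∧ (∀ j ≤ 0, ‖x j‖ ≤ C * ‖v‖) ∧ v - x 0 ∈ Z := by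
  have := (isClosed_boundedOrbits A).completeSpace_coe
  have := hZ.completeSpace_coe
  have hbij := orbitAddMap_bijective hspan huniq
  let e := ContinuousLinearEquiv.ofBijective (orbitAddMap A Z) (LinearMap.ker_eq_bot.2 hbij.1)
    (LinearMap.range_eq_top.2 hbij.2)
  refine ⟨‖(e.symm : X →L[ℝ] boundedOrbits A × Z)‖, norm_nonneg _, fun v =>
    ⟨(e.symm v).1, (e.symm v).1.2.1, fun j _ => ?_, ?_⟩⟩
  · calc ‖((e.symm v).1 : ℤ →ᵇ X) j‖ ≤ ‖((e.symm v).1 : ℤ →ᵇ X)‖ :=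
          BoundedContinuousFunction.norm_coe_le_norm _ j
      _ ≤ ‖e.symm v‖ := norm_fst_le (e.symm v)
      _ ≤ _ := (e.symm : X →L[ℝ] boundedOrbits A × Z).le_opNorm v
  · have h : orbitAddMap A Z (e.symm v) = v := e.apply_symm_apply v
    rw [orbitAddMap_apply] at h
    nth_rewrite 1 [← h]
    simp

theorem IsAdmissible.solutionsBoundedBy [CompleteSpace X] {L₀ : ℝ} (hadm : IsAdmissible A L₀)
    (hZ : IsClosed (Z : Set X)) (hspan : ∀ v : X, ∃ s ∈ Uset A 0, ∃ z ∈ Z, v = s + z)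
    (huniq : ∀ x : ℤ → X, IsOrbitUpTo A x 0 → BddUpTo x 0 → x 0 ∈ Z → ∀ j ≤ 0, x j = 0) :
    ∃ L, 0 < L ∧ SolutionsBoundedBy A Z L := by
  obtain ⟨C, hC0, hC⟩ := exists_orbit_sub_mem hZ hspan huniq
  refine ⟨max ((1 + C) * L₀) 1, lt_max_of_lt_right one_pos,
    fun f w F hf hw ⟨Cw, hCw⟩ hw0 j hj => ?_⟩
  obtain ⟨y, hy, hyb⟩ := hadm f F hf
  obtain ⟨x, hx, hxb, hxZ⟩ := hC (y 0)
  have hF : 0 ≤ F := (norm_nonneg _).trans (hf 0 le_rfl)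
  have hxF : ∀ j ≤ 0, ‖x j‖ ≤ C * (L₀ * F) := fun j hj =>
    (hxb j hj).trans (mul_le_mul_of_nonneg_left (hyb 0 le_rfl) hC0)
  have hwyx : w j = y j - x j := by
    refine sub_eq_zero.1 (huniq (fun j => w j - (y j - x j)) (fun j hj => ?_)
      ⟨Cw + (L₀ * F + C * (L₀ * F)), fun j hj => (norm_sub_le _ _).trans (add_le_add (hCw j hj)
        ((norm_sub_le _ _).trans (add_le_add (hyb j hj) (hxF j hj))))⟩ (Z.sub_mem hw0 hxZ) j hj)
    simp only [hw j hj, hy j hj, hx j hj, map_sub]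
    abel
  calc ‖w j‖ ≤ L₀ * F + C * (L₀ * F) := by
        rw [hwyx]
        exact (norm_sub_le _ _).trans (add_le_add (hyb j hj) (hxF j hj))
    _ = (1 + C) * L₀ * F := by ring
    _ ≤ max ((1 + C) * L₀) 1 * F := by gcongr; exact le_max_left _ _

end OrbitAddMap

/-! ### Massera–Schäffer estimates -/

/-- Massera–Schäffer: the partial sums `σ(j) = ∑_{i=n}^{j} 1/h(i)` grow geometrically, since
`σ(j) ≤ k / h(j) = k (σ(j) - σ(j-1))`. -/
theorem le_geometric_of_sum_inv_mul_le {h : ℤ → ℝ} {k : ℝ} {n m : ℤ} (hnm : n ≤ m)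
    (hpos : ∀ i ∈ Finset.Icc n m, 0 < h i)
    (hsum : ∀ j ∈ Finset.Icc n m, (∑ i ∈ Finset.Icc n j, (h i)⁻¹) * h j ≤ k) :
    h m ≤ k * (1 - k⁻¹) ^ (m - n).toNat * h n := by
  set σ : ℤ → ℝ := fun j => ∑ i ∈ Finset.Icc n j, (h i)⁻¹
  have hn : n ∈ Finset.Icc n m := Finset.mem_Icc.2 ⟨le_rfl, hnm⟩
  have hσn : σ n = (h n)⁻¹ := by simp [σ]
  have hk : 1 ≤ k := by
    simpa [hσn, inv_mul_cancel₀ (hpos n hn).ne'] using hsum n hn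
  have hθ : 0 ≤ 1 - k⁻¹ := sub_nonneg.2 (inv_le_one_of_one_le₀ hk)
  have hσ_le : ∀ j ∈ Finset.Icc n m, σ j ≤ k * (h j)⁻¹ := fun j hj => by
    have := hsum j hj
    rwa [← le_div_iff₀ (hpos j hj), div_eq_mul_inv] at this
  have hgrow : ∀ j, n ≤ j → j ≤ m → (h n)⁻¹ ≤ (1 - k⁻¹) ^ (j - n).toNat * σ j := by
    intro j hnj
    induction j, hnj using Int.leInduction with
    | base => simp [hσn]
    | succ j hnj ih =>
      intro hjm
      have hj1 : j + 1 ∈ Finset.Icc n m := Finset.mem_Icc.2 ⟨by omega, hjm⟩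
      have hsplit : σ (j + 1) = σ j + (h (j + 1))⁻¹ := by
        simp only [σ]
        rw [← Finset.insert_Icc_right_eq_Icc_add_one (by omega), Finset.sum_insert (by simp)]
        ring
      have hstep : σ j ≤ (1 - k⁻¹) * σ (j + 1) := by
        have := hσ_le _ hj1
        have : σ (j + 1) * k⁻¹ ≤ (h (j + 1))⁻¹ := by
          rw [← div_eq_mul_inv, div_le_iff₀ (by linarith)]; linarith
        nlinarith
      rw [show (j + 1 - n).toNat = (j - n).toNat + 1 by omega, pow_succ, mul_assoc]
      exact (ih (by omega)).trans (mul_le_mul_of_nonneg_left hstep (pow_nonneg hθ _))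
  have hm : m ∈ Finset.Icc n m := Finset.mem_Icc.2 ⟨hnm, le_rfl⟩
  have key : (h n)⁻¹ ≤ (1 - k⁻¹) ^ (m - n).toNat * k * (h m)⁻¹ := by
    rw [mul_assoc]
    exact (hgrow m hnm le_rfl).trans (mul_le_mul_of_nonneg_left (hσ_le m hm) (pow_nonneg hθ _))
  have hhn := hpos n hn
  have hhm := hpos m hm
  rw [inv_le_iff_one_le_mul₀ hhn] at key
  calc h m = h m * 1 := (mul_one _).symm
    _ ≤ h m * ((1 - k⁻¹) ^ (m - n).toNat * k * (h m)⁻¹ * h n) := by gcongr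
    _ = k * (1 - k⁻¹) ^ (m - n).toNat * h n := by field_simp

theorem le_geometric_of_sum_inv_mul_le' {h : ℤ → ℝ} {k : ℝ} {m n : ℤ} (hmn : m ≤ n)
    (hpos : ∀ i ∈ Finset.Icc m n, 0 < h i)
    (hsum : ∀ j ∈ Finset.Icc m n, (∑ i ∈ Finset.Icc j n, (h i)⁻¹) * h j ≤ k) :
    h m ≤ k * (1 - k⁻¹) ^ (n - m).toNat * h n := by
  have := le_geometric_of_sum_inv_mul_le (h := fun i => h (-i)) (k := k) (neg_le_neg hmn)
    (fun i hi => hpos _ (by simp only [Finset.mem_Icc] at hi ⊢; omega)) fun j hj => by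
      simp only [Finset.mem_Icc] at hj
      have hreflect : ∑ i ∈ Finset.Icc (-n) j, (h (-i))⁻¹ = ∑ i ∈ Finset.Icc (-j) n, (h i)⁻¹ :=
        Finset.sum_nbij' (fun i => -i) (fun i => -i)
          (fun i hi => by simp only [Finset.mem_Icc] at hi ⊢; omega)
          (fun i hi => by simp only [Finset.mem_Icc] at hi ⊢; omega) (by simp) (by simp)
          fun i _ => rfl
      rw [hreflect]
      exact hsum _ (Finset.mem_Icc.2 ⟨by omega, by omega⟩)
  simpa [neg_add_eq_sub] using this

theorem sum_filter_le_sub_sum_filter_le (W : Finset ℤ) (a : ℤ → ℝ) (j : ℤ) :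
    ∑ i ∈ W with i ≤ j, a i - ∑ i ∈ W with i ≤ j - 1, a i = if j ∈ W then a j else 0 := by
  rw [Finset.sum_filter, Finset.sum_filter, ← Finset.sum_sub_distrib, ← Finset.sum_ite_eq]
  refine Finset.sum_congr rfl fun i _ => ?_
  split_ifs <;> first | (exfalso; omega) | ring

theorem exists_mem_Uset_sub_mem {A : ℤ → X →L[ℝ] X} {Z : Submodule ℝ X}
    (hspan : ∀ v : X, ∃ s ∈ Uset A 0, ∃ z ∈ Z, v = s + z) {n : ℤ} (hn : n ≤ 0) (v : X) :
    ∃ u ∈ Uset A n, Phi A 0 n (v - u) ∈ Z := by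
  obtain ⟨s, ⟨x, rfl, hb, hx⟩, z, hz, hv⟩ := hspan (Phi A 0 n v)
  refine ⟨x n, mem_Uset_of_isOrbitUpTo hx hb hn, ?_⟩
  rwa [map_sub, IsOrbitUpTo.Phi_apply A hx hn le_rfl, hv, add_sub_cancel_left]

def IsStableProj (A : ℤ → X →L[ℝ] X) (Z : Submodule ℝ X) (P : ℤ → X →L[ℝ] X) : Prop :=
  ∀ n ≤ 0, ∀ v, Phi A 0 n (P n v) ∈ Z ∧ v - P n v ∈ Uset A n

namespace SolutionsBoundedBy

variable {A : ℤ → X →L[ℝ] X} {Z : Submodule ℝ X} {L : ℝ}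

theorem eq_zero_of_mem_Uset (hA : SolutionsBoundedBy A Z L) {n : ℤ} (hn : n ≤ 0) {u : X}
    (hu : u ∈ Uset A n) (hZ : Phi A 0 n u ∈ Z) : u = 0 := by
  obtain ⟨x, rfl, hx, hb, hxPhi⟩ := exists_orbit_of_mem_Uset hu
  simpa using hA 0 x 0 (by simp) (fun j hj => by simpa using hx j hj) hb
    (by rwa [hxPhi 0 hn]) n hn

theorem eq_of_sub_mem_Uset (hA : SolutionsBoundedBy A Z L) {n : ℤ} (hn : n ≤ 0) {v r r' : X}
    (hr : Phi A 0 n r ∈ Z) (hr' : Phi A 0 n r' ∈ Z) (hvr : v - r ∈ Uset A n)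
    (hvr' : v - r' ∈ Uset A n) : r = r' := by
  have hU := (unstableSubspace A n).sub_mem hvr' hvr
  rw [sub_sub_sub_cancel_left] at hU
  exact sub_eq_zero.1 (hA.eq_zero_of_mem_Uset hn hU (by rw [map_sub]; exact Z.sub_mem hr hr'))

/-- Test with `f = δₙ v`: the solution is `-x` before `n`, for a bounded backward orbit `x` of
`v - r`, and `Φ(j, n) r` from `n` on. -/
theorem norm_le_of_sub_mem_Uset (hA : SolutionsBoundedBy A Z L) {n : ℤ} (hn : n ≤ 0) {v r : X}
    (hr : Phi A 0 n r ∈ Z) (hvr : v - r ∈ Uset A n) : ‖r‖ ≤ L * ‖v‖ := by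
  obtain ⟨x, hxn, ⟨C, hC⟩, hx⟩ := hvr
  set w : ℤ → X := fun j => if j < n then -x j else Phi A j n r
  have hw : SolvesUpTo A (fun j => if j = n then v else 0) w 0 := by
    intro j _
    rcases lt_trichotomy j n with h | rfl | h
    · simp [w, h, show j - 1 < n by omega, hx j h.le, h.ne]
    · simp only [w, lt_irrefl, if_false, show j - 1 < j by omega, if_true, Phi_self, map_neg,
        ← hx j le_rfl, hxn, ContinuousLinearMap.id_apply]
      abel
    · simp only [w, show ¬ j < n by omega, show ¬ j - 1 < n by omega, if_false, h.ne',
        add_zero]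
      rw [← Phi_succ_apply A (by omega), sub_add_cancel]
  have hwb : BddUpTo w (n - 1) :=
    ⟨C, fun j hj => by simpa [w, show j < n by omega] using hC j (by omega)⟩
  have := hA _ w ‖v‖ (fun j _ => by split_ifs <;> simp) hw (hwb.extend 0)
    (by simpa [w, show ¬ (0 : ℤ) < n by omega] using hr) n hn
  simpa [w, Phi_self] using this

/-- The Massera–Schäffer test function `w = s • x` has inhomogeneity `(s j - s (j - 1)) • x j`
of norm at most `1`. -/
theorem abs_mul_norm_le (hA : SolutionsBoundedBy A Z L) {x : ℤ → X} {s : ℤ → ℝ}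
    {W : Finset ℤ} (hs : ∀ j, s j - s (j - 1) = if j ∈ W then ‖x j‖⁻¹ else 0)
    (hx : ∀ j ≤ 0, s (j - 1) = 0 ∨ x j = A (j - 1) (x (j - 1)))
    (hb : BddUpTo (fun j => s j • x j) 0) (h0 : s 0 • x 0 ∈ Z) :
    ∀ j ≤ 0, |s j| * ‖x j‖ ≤ L := by
  have hf : ∀ j ≤ 0, ‖(s j - s (j - 1)) • x j‖ ≤ 1 := fun j _ => by
    rw [hs, norm_smul]
    split_ifs
    · rw [norm_inv, norm_norm]
      exact inv_mul_le_one_of_le₀ le_rfl (norm_nonneg _)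
    · simp
  have hsol : SolvesUpTo A (fun j => (s j - s (j - 1)) • x j) (fun j => s j • x j) 0 := by
    intro j hj
    rcases hx j hj with h | h
    · simp [h]
    · rw [map_smul, ← h, ← add_smul, add_sub_cancel]
  intro j hj
  simpa [norm_smul] using hA _ _ 1 hf hsol hb h0 j hj

theorem norm_Phi_le (hA : SolutionsBoundedBy A Z L) (hL : 0 ≤ L) {n m : ℤ} {v : X}
    (hv : Phi A 0 n v ∈ Z) (hnm : n ≤ m) (hm : m ≤ 0) :
    ‖Phi A m n v‖ ≤ (L + 1) * (1 - (L + 1)⁻¹) ^ (m - n).toNat * ‖v‖ := by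
  set x : ℤ → X := fun j => Phi A j n v
  have hxn : x n = v := by simp [x, Phi_self]
  have hx : ∀ j, n < j → x j = A (j - 1) (x (j - 1)) := fun j hj => by
    simp only [x]
    rw [← Phi_succ_apply A (by omega), sub_add_cancel]
  by_cases hzero : ∃ i ∈ Finset.Icc n m, x i = 0
  · obtain ⟨i, hi, hxi⟩ := hzero
    rw [Finset.mem_Icc] at hi
    have hxm : x m = 0 := by
      rw [← Phi_apply_eq_of_forall_step A hi.2 fun j h _ => hx j (by omega), hxi, map_zero]
    have : 0 ≤ 1 - (L + 1)⁻¹ := sub_nonneg.2 (inv_le_one_of_one_le₀ (by linarith))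
    change ‖x m‖ ≤ _
    rw [hxm, norm_zero]
    positivity
  push Not at hzero
  set s : ℤ → ℝ := fun j => ∑ i ∈ Finset.Icc n m with i ≤ j, ‖x i‖⁻¹
  have hs_lt : ∀ j < n, s j = 0 := fun j hj => Finset.sum_eq_zero fun i hi => by
    simp only [Finset.mem_filter, Finset.mem_Icc] at hi
    omega
  have key := hA.abs_mul_norm_le (W := Finset.Icc n m) (x := x) (s := s)
    (fun j => sum_filter_le_sub_sum_filter_le _ _ j)
    (fun j _ => if h : n < j then Or.inr (hx j h) else Or.inl (hs_lt _ (by omega)))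
    (BddUpTo.extend (m := n - 1) ⟨0, fun j hj => by simp [hs_lt j (by omega)]⟩ 0)
    (Z.smul_mem _ hv)
  change ‖x m‖ ≤ _
  rw [← hxn]
  refine le_geometric_of_sum_inv_mul_le hnm (fun i hi => norm_pos_iff.2 (hzero i hi))
    fun j hj => ?_
  rw [Finset.mem_Icc] at hj
  have hsj : s j = ∑ i ∈ Finset.Icc n j, ‖x i‖⁻¹ := by
    simp only [s]
    congr 1
    ext i
    simp only [Finset.mem_filter, Finset.mem_Icc]
    omega
  have := key j (by omega)
  rw [hsj, abs_of_nonneg (by positivity)] at this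
  linarith

theorem norm_le_of_isOrbitUpTo (hA : SolutionsBoundedBy A Z L) (hL : 0 ≤ L) {x : ℤ → X}
    (hx : IsOrbitUpTo A x 0) (hb : BddUpTo x 0) {m n : ℤ} (hmn : m ≤ n) (hn : n ≤ 0) :
    ‖x m‖ ≤ (L + 1) * (1 - (L + 1)⁻¹) ^ (n - m).toNat * ‖x n‖ := by
  by_cases hzero : ∃ i ∈ Finset.Icc m n, x i = 0
  · obtain ⟨i, hi, hxi⟩ := hzero
    rw [Finset.mem_Icc] at hi
    have hxm : x m = 0 := hA.eq_zero_of_mem_Uset (hmn.trans hn) (mem_Uset_of_isOrbitUpTo hx hb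
      (hmn.trans hn)) (by
        rw [IsOrbitUpTo.Phi_apply A hx (hmn.trans hn) le_rfl,
          ← IsOrbitUpTo.Phi_apply A hx (hi.2.trans hn) le_rfl, hxi, map_zero]
        exact Z.zero_mem)
    have : 0 ≤ 1 - (L + 1)⁻¹ := sub_nonneg.2 (inv_le_one_of_one_le₀ (by linarith))
    rw [hxm, norm_zero]
    positivity
  push Not at hzero
  set W := Finset.Icc m n
  set s : ℤ → ℝ := fun j => ∑ i ∈ W with i ≤ j, ‖x i‖⁻¹ - ∑ i ∈ W, ‖x i‖⁻¹
  have hs : ∀ j, s j = -∑ i ∈ W with ¬ i ≤ j, ‖x i‖⁻¹ := fun j => by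
    simp only [s]
    rw [← Finset.sum_filter_add_sum_filter_not W (· ≤ j)]
    ring
  have hs_abs : ∀ j, |s j| = ∑ i ∈ W with ¬ i ≤ j, ‖x i‖⁻¹ := fun j => by
    rw [hs, abs_neg, abs_of_nonneg (by positivity)]
  have hs0 : s 0 = 0 := by
    rw [hs, neg_eq_zero]
    exact Finset.sum_eq_zero fun i hi => by
      simp only [W, Finset.mem_filter, Finset.mem_Icc] at hi
      omega
  obtain ⟨C, hC⟩ := hb
  have key := hA.abs_mul_norm_le (W := W) (x := x) (s := s)
    (fun j => by
      simp only [s]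
      rw [sub_sub_sub_cancel_right]
      exact sum_filter_le_sub_sum_filter_le _ _ j)
    (fun j hj => Or.inr (hx j hj))
    ⟨(∑ i ∈ W, ‖x i‖⁻¹) * C, fun j hj => by
      rw [norm_smul, Real.norm_eq_abs, hs_abs]
      exact mul_le_mul (Finset.sum_le_sum_of_subset_of_nonneg (Finset.filter_subset _ _)
        fun _ _ _ => by positivity) (hC j hj) (norm_nonneg _) (by positivity)⟩
    (by rw [hs0, zero_smul]; exact Z.zero_mem)
  refine le_geometric_of_sum_inv_mul_le' hmn (fun i hi => norm_pos_iff.2 (hzero i hi))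
    fun j hj => ?_
  rw [Finset.mem_Icc] at hj
  have hfilter : W.filter (fun i => ¬ i ≤ j) = Finset.Icc (j + 1) n := by
    ext i
    simp only [W, Finset.mem_filter, Finset.mem_Icc]
    omega
  have := key j (by omega)
  rw [hs_abs, hfilter] at this
  rw [← Finset.insert_Icc_add_one_left_eq_Icc hj.2, Finset.sum_insert (by simp), add_mul,
    inv_mul_cancel₀ (norm_ne_zero_iff.2 (hzero j (Finset.mem_Icc.2 hj)))]
  linarith

theorem exists_isStableProj (hA : SolutionsBoundedBy A Z L)
    (hspan : ∀ v : X, ∃ s ∈ Uset A 0, ∃ z ∈ Z, v = s + z) :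
    ∃ P : ℤ → X →L[ℝ] X, IsStableProj A Z P := by
  have hcompl : ∀ n ≤ 0,
      IsCompl (Z.comap (Phi A 0 n : X →ₗ[ℝ] X)) (unstableSubspace A n) := fun n hn =>
    ⟨Submodule.disjoint_def.2 fun u hr hu => hA.eq_zero_of_mem_Uset hn hu hr,
      Submodule.codisjoint_iff_exists_add_eq.2 fun v => by
        obtain ⟨u, hu, hvu⟩ := exists_mem_Uset_sub_mem hspan hn v
        exact ⟨v - u, u, hvu, hu, sub_add_cancel v u⟩⟩
  refine ⟨fun n => if hn : n ≤ 0 then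
    (Submodule.projection _ _ (hcompl n hn)).mkContinuous L fun v =>
      hA.norm_le_of_sub_mem_Uset hn (Submodule.projection_apply_mem (hcompl n hn) v)
        (Submodule.sub_projection_mem (hcompl n hn) v) else 0, fun n hn v => ?_⟩
  simp only [dif_pos hn, LinearMap.mkContinuous_apply]
  exact ⟨Submodule.projection_apply_mem (hcompl n hn) v,
    Submodule.sub_projection_mem (hcompl n hn) v⟩

end SolutionsBoundedBy

namespace IsStableProj

variable {A : ℤ → X →L[ℝ] X} {Z : Submodule ℝ X} {L : ℝ} {P : ℤ → X →L[ℝ] X}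

theorem apply_eq (hA : SolutionsBoundedBy A Z L) (hP : IsStableProj A Z P)
    {n : ℤ} (hn : n ≤ 0) {v r : X} (hr : Phi A 0 n r ∈ Z) (hvr : v - r ∈ Uset A n) :
    P n v = r :=
  hA.eq_of_sub_mem_Uset hn (hP n hn v).1 hr (hP n hn v).2 hvr

theorem apply_eq_zero_iff (hA : SolutionsBoundedBy A Z L)
    (hP : IsStableProj A Z P) {n : ℤ} (hn : n ≤ 0) {v : X} : P n v = 0 ↔ v ∈ Uset A n :=
  ⟨fun h => by simpa [h] using (hP n hn v).2,
    fun h => hP.apply_eq hA hn (by simp) (by simpa using h)⟩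

theorem norm_apply_le (hA : SolutionsBoundedBy A Z L) (hP : IsStableProj A Z P)
    {n : ℤ} (hn : n ≤ 0) (v : X) : ‖P n v‖ ≤ L * ‖v‖ :=
  hA.norm_le_of_sub_mem_Uset hn (hP n hn v).1 (hP n hn v).2

theorem idempotent (hA : SolutionsBoundedBy A Z L) (hP : IsStableProj A Z P)
    {n : ℤ} (hn : n ≤ 0) : (P n).comp (P n) = P n := by
  ext v
  show P n (P n v) = P n v
  exact hP.apply_eq hA hn (hP n hn v).1 (by rw [sub_self]; exact (unstableSubspace A n).zero_mem)

theorem comp_eq (hA : SolutionsBoundedBy A Z L) (hP : IsStableProj A Z P)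
    {n : ℤ} (hn : n ≤ -1) : (A n).comp (P n) = (P (n + 1)).comp (A n) := by
  ext v
  show A n (P n v) = P (n + 1) (A n v)
  have hn0 : n ≤ 0 := by omega
  refine (hP.apply_eq hA (by omega) ?_ ?_).symm
  · rw [← Phi_succ_self_apply A n (P n v), Phi_apply_Phi A (by omega) (by omega)]
    exact (hP n hn0 v).1
  · rw [← map_sub, ← Phi_succ_self_apply A n]
    exact Phi_mem_Uset (hP n hn0 v).2 (by omega)

theorem bijOn (hA : SolutionsBoundedBy A Z L) (hP : IsStableProj A Z P)
    {n : ℤ} (hn : n ≤ -1) :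
    Set.BijOn (A n) {x : X | P n x = 0} {x : X | P (n + 1) x = 0} := by
  have hn0 : n ≤ 0 := by omega
  have hU := fun {x : X} => hP.apply_eq_zero_iff hA hn0 (v := x)
  have hU' := fun {x : X} => hP.apply_eq_zero_iff hA (show n + 1 ≤ 0 by omega) (v := x)
  refine ⟨fun x hx => ?_, fun x hx y hy hxy => ?_, fun y hy => ?_⟩
  · show P (n + 1) (A n x) = 0
    rw [hU', ← Phi_succ_self_apply]
    exact Phi_mem_Uset (hU.1 hx) (by omega)
  · refine sub_eq_zero.1 (hA.eq_zero_of_mem_Uset hn0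
      ((unstableSubspace A n).sub_mem (hU.1 hx) (hU.1 hy)) ?_)
    rw [← Phi_apply_Phi A (k := n + 1) (by omega) (by omega), Phi_succ_self_apply, map_sub, hxy,
      sub_self, map_zero]
    exact Z.zero_mem
  · obtain ⟨x, rfl, hb, hx⟩ := hU'.1 hy
    exact ⟨x n, hU.2 (mem_Uset_of_isOrbitUpTo hx hb (by omega)),
      by rw [hx (n + 1) le_rfl, add_sub_cancel_right]⟩

theorem norm_Phi_comp_le (hA : SolutionsBoundedBy A Z L) (hL : 0 ≤ L)
    (hP : IsStableProj A Z P) {m n : ℤ} (hm : m ≤ 0) (hnm : n ≤ m) :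
    ‖(Phi A m n).comp (P n)‖ ≤ (L + 1) ^ 2 * (1 - (L + 1)⁻¹) ^ (m - n).toNat := by
  have hθ : 0 ≤ 1 - (L + 1)⁻¹ := sub_nonneg.2 (inv_le_one_of_one_le₀ (by linarith))
  refine ContinuousLinearMap.opNorm_le_bound _ (by positivity) fun v => ?_
  calc ‖Phi A m n (P n v)‖
      ≤ (L + 1) * (1 - (L + 1)⁻¹) ^ (m - n).toNat * ‖P n v‖ :=
        hA.norm_Phi_le hL (hP n (hnm.trans hm) v).1 hnm hm
    _ ≤ (L + 1) * (1 - (L + 1)⁻¹) ^ (m - n).toNat * ((L + 1) * ‖v‖) := by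
        gcongr
        exact (hP.norm_apply_le hA (hnm.trans hm) v).trans (by nlinarith [norm_nonneg v])
    _ = (L + 1) ^ 2 * (1 - (L + 1)⁻¹) ^ (m - n).toNat * ‖v‖ := by ring

theorem norm_le_of_Phi_eq (hA : SolutionsBoundedBy A Z L) (hL : 0 ≤ L)
    (hP : IsStableProj A Z P) {m n : ℤ} (hn : n ≤ 0) (hmn : m ≤ n) {x y : X}
    (hx : P m x = 0) (hxy : Phi A n m x = y - P n y) :
    ‖x‖ ≤ (L + 1) ^ 2 * (1 - (L + 1)⁻¹) ^ (n - m).toNat * ‖y‖ := by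
  have hθ : 0 ≤ 1 - (L + 1)⁻¹ := sub_nonneg.2 (inv_le_one_of_one_le₀ (by linarith))
  obtain ⟨z, rfl, hz, hzb, hzPhi⟩ :=
    exists_orbit_of_mem_Uset ((hP.apply_eq_zero_iff hA (hmn.trans hn)).1 hx)
  calc ‖z m‖ ≤ (L + 1) * (1 - (L + 1)⁻¹) ^ (n - m).toNat * ‖z n‖ :=
        hA.norm_le_of_isOrbitUpTo hL hz hzb hmn hn
    _ ≤ (L + 1) * (1 - (L + 1)⁻¹) ^ (n - m).toNat * ((L + 1) * ‖y‖) := by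
        rw [hzPhi n hmn, hxy]
        gcongr
        linarith [norm_sub_le y (P n y), hP.norm_apply_le hA hn y]
    _ = (L + 1) ^ 2 * (1 - (L + 1)⁻¹) ^ (n - m).toNat * ‖y‖ := by ring

end IsStableProj

theorem SolutionsBoundedBy.expDichotomy {A : ℤ → X →L[ℝ] X} {Z : Submodule ℝ X} {L : ℝ}
    (hA : SolutionsBoundedBy A Z L) (hL : 0 < L)
    (hspan : ∀ v : X, ∃ s ∈ Uset A 0, ∃ z ∈ Z, v = s + z) :
    ExpDichotomy {n : ℤ | n ≤ 0} {n : ℤ | n ≤ -1} A := by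
  obtain ⟨P, hP⟩ := hA.exists_isStableProj hspan
  set θ := 1 - (L + 1)⁻¹
  have hθ0 : 0 < θ := sub_pos.2 (inv_lt_one_of_one_lt₀ (by linarith))
  have hθ1 : θ < 1 := sub_lt_self _ (by positivity)
  have hexp : ∀ m n : ℤ, n ≤ m → Real.exp (-(-Real.log θ) * ((m : ℝ) - n)) = θ ^ (m - n).toNat :=
    fun m n h => by rw [exp_neg_mul_sub_eq_pow _ h, neg_neg, Real.exp_log hθ0]
  refine ⟨P, (L + 1) ^ 2, -Real.log θ, by positivity, neg_pos.2 (Real.log_neg hθ0 hθ1),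
    fun n hn => hP.idempotent hA hn, fun n hn => hP.comp_eq hA hn, fun n hn => hP.bijOn hA hn,
    fun m n hm _ hnm => ?_, fun m n _ hn hmn x y hx hxy => ?_⟩
  · rw [hexp m n hnm]
    exact hP.norm_Phi_comp_le hA hL.le hm hnm
  · rw [hexp n m hmn]
    exact hP.norm_le_of_Phi_eq hA hL.le hn hmn hx hxy

theorem block2_dichotomy_of_triangular_Zminus {H1 : Type u} {H2 : Type u}
    [NormedAddCommGroup H1] [InnerProductSpace ℝ H1] [CompleteSpace H1]
    [NormedAddCommGroup H2] [InnerProductSpace ℝ H2] [CompleteSpace H2]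
    (A11 : ℤ → H1 →L[ℝ] H1) (A12 : ℤ → H2 →L[ℝ] H1) (A22 : ℤ → H2 →L[ℝ] H2)
    (htri : ExpDichotomy {n : ℤ | n ≤ 0} {n : ℤ | n ≤ -1} (triangular A11 A12 A22))
    (hU2 : IsComplementedSubspace (Uset A22 0))
    (huniq : ∀ x2 : ℤ → H2, x2 0 = 0 → (∃ C : ℝ, ∀ n : ℤ, n ≤ 0 → ‖x2 n‖ ≤ C) →
      (∀ n : ℤ, n ≤ 0 → x2 n = A22 (n - 1) (x2 (n - 1))) → ∀ n : ℤ, n ≤ 0 → x2 n = 0) :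
    ExpDichotomy {n : ℤ | n ≤ 0} {n : ℤ | n ≤ -1} A22 := by
  obtain ⟨P, hP⟩ := htri
  obtain ⟨Z, hZ, hdisj, hspan⟩ := hU2
  have huniqZ : ∀ x : ℤ → H2, IsOrbitUpTo A22 x 0 → BddUpTo x 0 → x 0 ∈ Z → ∀ n ≤ 0, x n = 0 :=
    fun x hx hb h0 => huniq x (hdisj _ ⟨x, rfl, hb, hx⟩ h0) hb hx
  obtain ⟨L₀, hadm⟩ := hP.isAdmissible
  obtain ⟨L, hL, hA⟩ := hadm.triangular_snd.solutionsBoundedBy hZ hspan huniqZ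
  exact hA.expDichotomy hL hspan

end
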